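/- arXiv:math/0303036 — 3 statements merged into one kernel-verified Lean document; each statement's English description precedes it below -/
import Mathlib

section
/- Let σ be a permutation of a finite set of size n = s + t that factors as σ = σ₁σ₂ where σ₁ and σ₂ have disjoint supports. Suppose σ₁ is a product of two t-cycles each supported in the support region of σ₁ (a set of size t), and σ₂ is a product of two s-cycles each supported in a disjoint set of size s. Then σ is a product of two n-cycles. -/
/-!
Pick `a ∈ A` and `b ∈ B`. Multiplying two cycles with disjoint supports by the transposition
`(a b)` joining them gives a single cycle on the union of the supports. Since `c₂` and `c₃`
commute, `σ = (c₁ c₃ (a b)) ((a b) c₂ c₄)`, and both factors are such joined cycles on `A ∪ B`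
(the first one after inversion, as `(b a) c₃⁻¹ c₁⁻¹`).
-/

open Finset

namespace Equiv.Perm

variable {α : Type*} [DecidableEq α] [Fintype α]

omit [DecidableEq α] in
theorem IsCycle.forall_mem_support_of_invariant {f : Perm α} (hf : f.IsCycle) {p : α → Prop}
    {a : α} (ha : f a ≠ a) (hpa : p a) (hp : ∀ x, p x → p (f x)) {y : α} (hy : f y ≠ y) :
    p y := by
  obtain ⟨k, rfl⟩ := hf.exists_pow_eq ha hy
  clear hy
  induction k with
  | zero => exact hpa
  | succ k ih =>
    rw [pow_succ', mul_apply]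
    exact hp _ ih

-- `(a b) f g` runs through `a, f a, …, f⁻¹ a, b, g b, …, g⁻¹ b` and back to `a`.
theorem sameCycle_swap_mul_mul {f g : Perm α} (hf : f.IsCycle) (hg : g.IsCycle)
    (hd : f.Disjoint g) {a b : α} (ha : f a ≠ a) (hb : g b ≠ b) {y : α}
    (hy : f y ≠ y ∨ g y ≠ y) : (swap a b * f * g).SameCycle a y := by
  set h := swap a b * f * g
  have hfb : f b = b := (hd b).resolve_right hb
  have hga : g a = a := (hd a).resolve_left ha
  have hF : ∀ x, f x ≠ x → f x ≠ a → h x = f x := fun x hx hxa => by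
    have hfx : f (f x) ≠ f x := fun e => hx (f.injective e)
    have hxb : f x ≠ b := fun e => hfx (by rw [e, hfb])
    simp [h, (hd x).resolve_left hx, swap_apply_of_ne_of_ne hxa hxb]
  have hG : ∀ x, g x ≠ x → g x ≠ b → h x = g x := fun x hx hxb => by
    have hgx : g (g x) ≠ g x := fun e => hx (g.injective e)
    have hxa : g x ≠ a := fun e => hgx (by rw [e, hga])
    simp [h, (hd (g x)).resolve_right hgx, swap_apply_of_ne_of_ne hxa hxb]
  have hfa : f (f⁻¹ a) = a := by simp
  have hfa_ne : f (f⁻¹ a) ≠ f⁻¹ a := by rwa [hfa, Ne, eq_inv_iff_eq]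
  have hba : h (f⁻¹ a) = b := by
    simp only [h, mul_apply, (hd _).resolve_left hfa_ne, hfa, swap_apply_left]
  have hF_cycle : ∀ y, f y ≠ y → h.SameCycle a y := by
    refine fun y => hf.forall_mem_support_of_invariant ha (.refl _ _) fun x hx => ?_
    by_cases hfx : f x = x
    · rwa [hfx]
    by_cases hxa : f x = a
    · rw [hxa]
    · rwa [← hF x hfx hxa, sameCycle_apply_right]
  have hb_cycle : h.SameCycle a b := by
    rw [← hba, sameCycle_apply_right]
    exact hF_cycle _ hfa_ne
  have hG_cycle : ∀ y, g y ≠ y → h.SameCycle a y := by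
    refine fun y => hg.forall_mem_support_of_invariant hb hb_cycle fun x hx => ?_
    by_cases hgx : g x = x
    · rwa [hgx]
    by_cases hxb : g x = b
    · rwa [hxb]
    · rwa [← hG x hgx hxb, sameCycle_apply_right]
  exact hy.elim (hF_cycle y) (hG_cycle y)

theorem IsCycle.swap_mul_mul {f g : Perm α} (hf : f.IsCycle) (hg : g.IsCycle)
    (hd : f.Disjoint g) {a b : α} (ha : f a ≠ a) (hb : g b ≠ b) :
    (swap a b * f * g).IsCycle ∧ (swap a b * f * g).support = f.support ∪ g.support := by
  set h := swap a b * f * g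
  have hmoved : ∀ y, h y ≠ y → f y ≠ y ∨ g y ≠ y := fun y hy => by
    by_contra! hfg
    have hya : y ≠ a := by rintro rfl; exact ha hfg.1
    have hyb : y ≠ b := by rintro rfl; exact hb hfg.2
    exact hy (by simp [h, hfg.1, hfg.2, swap_apply_of_ne_of_ne hya hyb])
  have hha : h a ≠ a := by
    have hfab : f a ≠ b := fun e => hb (by rw [← e, (hd (f a)).resolve_left (by simpa using ha)])
    simpa [h, (hd a).resolve_left ha, swap_apply_of_ne_of_ne ha hfab] using ha
  have hcycle : ∀ y, (f y ≠ y ∨ g y ≠ y) → h.SameCycle a y :=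
    fun _ => sameCycle_swap_mul_mul hf hg hd ha hb
  refine ⟨⟨a, hha, fun y hy => hcycle y (hmoved y hy)⟩, ?_⟩
  ext y
  simp only [mem_union, mem_support]
  exact ⟨hmoved y, fun hy e => hha (((hcycle y hy).apply_eq_self_iff).2 e)⟩

theorem exists_isCycle_mul_isCycle_of_disjoint {c₁ c₂ c₃ c₄ : Perm α} {A B : Finset α}
    (hAB : _root_.Disjoint A B) (hc₁ : c₁.IsCycle) (hc₁A : c₁.support = A)
    (hc₂ : c₂.IsCycle) (hc₂A : c₂.support = A)
    (hc₃ : c₃.IsCycle) (hc₃B : c₃.support = B)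
    (hc₄ : c₄.IsCycle) (hc₄B : c₄.support = B) :
    ∃ ρ₁ ρ₂ : Perm α, ρ₁.IsCycle ∧ ρ₁.support = A ∪ B ∧ ρ₂.IsCycle ∧ ρ₂.support = A ∪ B ∧
      c₁ * c₂ * (c₃ * c₄) = ρ₁ * ρ₂ := by
  have disj : ∀ {f g : Perm α}, f.support = A → g.support = B → f.Disjoint g := fun hf hg => by
    rw [disjoint_iff_disjoint_support, hf, hg]
    exact hAB
  obtain ⟨a, ha, -⟩ := id hc₁
  obtain ⟨b, hb, -⟩ := id hc₃
  have ha₂ : c₂ a ≠ a := by rw [← mem_support, hc₂A, ← hc₁A, mem_support]; exact ha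
  have hb₄ : c₄ b ≠ b := by rw [← mem_support, hc₄B, ← hc₃B, mem_support]; exact hb
  have hb₃ : c₃⁻¹ b ≠ b := by rwa [Ne, inv_eq_iff_eq, eq_comm]
  have ha₁ : c₁⁻¹ a ≠ a := by rwa [Ne, inv_eq_iff_eq, eq_comm]
  obtain ⟨hρ₁, hρ₁_supp⟩ :=
    hc₃.inv.swap_mul_mul hc₁.inv (disj hc₁A hc₃B).symm.inv_left.inv_right hb₃ ha₁
  obtain ⟨hρ₂, hρ₂_supp⟩ := hc₂.swap_mul_mul hc₄ (disj hc₂A hc₄B) ha₂ hb₄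
  refine ⟨(swap b a * c₃⁻¹ * c₁⁻¹)⁻¹, swap a b * c₂ * c₄, hρ₁.inv, ?_, hρ₂, ?_, ?_⟩
  · rw [support_inv, hρ₁_supp, support_inv, support_inv, hc₁A, hc₃B, union_comm]
  · rw [hρ₂_supp, hc₂A, hc₄B]
  · calc c₁ * c₂ * (c₃ * c₄) = c₁ * (c₃ * (c₂ * c₄)) := by
          rw [mul_assoc, ← mul_assoc c₂, (disj hc₂A hc₃B).commute.eq, mul_assoc]
      _ = (swap b a * c₃⁻¹ * c₁⁻¹)⁻¹ * (swap a b * c₂ * c₄) := by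
        simp only [swap_comm b a, mul_inv_rev, swap_inv, inv_inv, mul_assoc, swap_mul_self_mul]

end Equiv.Perm

theorem stmt_2 (n s t : ℕ) (hn : n = s + t)
    (σ σ₁ σ₂ c₁ c₂ c₃ c₄ : Equiv.Perm (Fin n))
    (A B : Finset (Fin n)) (hA : A.card = t) (hB : B.card = s)
    (hAB : Disjoint A B)
    (hσ : σ = σ₁ * σ₂)
    (h₁ : σ₁ = c₁ * c₂) (h₂ : σ₂ = c₃ * c₄)
    (hc₁ : c₁.IsCycle) (hc₁A : c₁.support = A)
    (hc₂ : c₂.IsCycle) (hc₂A : c₂.support = A)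
    (hc₃ : c₃.IsCycle) (hc₃B : c₃.support = B)
    (hc₄ : c₄.IsCycle) (hc₄B : c₄.support = B) :
    ∃ ρ₁ ρ₂ : Equiv.Perm (Fin n),
      ρ₁.IsCycle ∧ ρ₁.support.card = n ∧
      ρ₂.IsCycle ∧ ρ₂.support.card = n ∧ σ = ρ₁ * ρ₂ := by
  obtain ⟨ρ₁, ρ₂, hρ₁, hρ₁AB, hρ₂, hρ₂AB, hprod⟩ :=
    Equiv.Perm.exists_isCycle_mul_isCycle_of_disjoint hAB hc₁ hc₁A hc₂ hc₂A hc₃ hc₃B hc₄ hc₄B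
  have hcard : (A ∪ B).card = n := by rw [card_union_of_disjoint hAB, hA, hB, hn, add_comm]
  exact ⟨ρ₁, ρ₂, hρ₁, hρ₁AB ▸ hcard, hρ₂, hρ₂AB ▸ hcard, by rw [hσ, h₁, h₂, hprod]⟩
end

section
/- Let n = 2s + 2t with 0 < s < t, and let σ ∈ S_n be a product of a 2s-cycle and a 2t-cycle with disjoint supports. Then σ is a product of two n-cycles. -/
open Equiv Equiv.Perm List
open Fin.NatCast

namespace Stmt7Aux

lemma fin_cast_inj {n a b : ℕ} [NeZero n] (ha : a < n) (hb : b < n) :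
    ((a : Fin n) = (b : Fin n)) ↔ a = b := by
  constructor
  · intro h
    have := congrArg Fin.val h
    simpa [Fin.val_natCast, Nat.mod_eq_of_lt ha, Nat.mod_eq_of_lt hb] using this
  · rintro rfl; rfl

lemma fin_cast_mod {n : ℕ} [NeZero n] (a : ℕ) : ((a % n : ℕ) : Fin n) = (a : Fin n) := by
  apply Fin.ext
  simp only [Fin.val_natCast, Nat.mod_mod_of_dvd _ dvd_rfl]

/-- values of the long cycle (length `2*t`) -/
def gA (s t i : ℕ) : ℕ :=
  if i = 0 then 1
  else if i ≤ 2*s then 2*(t-s) - 1 + 2*i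
  else if i ≤ s + t then 2*(i - 2*s)
  else 2*(i - s - t) + 1

/-- values of the short cycle (length `2*s`) -/
def gB (s t j : ℕ) : ℕ :=
  if j = 0 then 0 else 2*(t-s) + 2*j

lemma gA_lt {s t : ℕ} (hs : 0 < s) (hst : s < t) {i : ℕ} (hi : i < 2*t) :
    gA s t i < 2*s + 2*t := by
  unfold gA; split_ifs <;> omega

lemma gB_lt {s t : ℕ} (hs : 0 < s) (hst : s < t) {j : ℕ} (hj : j < 2*s) :
    gB s t j < 2*s + 2*t := by
  unfold gB; split_ifs <;> omega

lemma gA_inj {s t : ℕ} (hs : 0 < s) (hst : s < t) {i j : ℕ} (hi : i < 2*t) (hj : j < 2*t)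
    (h : gA s t i = gA s t j) : i = j := by
  unfold gA at h; split_ifs at h <;> omega

lemma gB_inj {s t : ℕ} (hs : 0 < s) (hst : s < t) {i j : ℕ} (hi : i < 2*s) (hj : j < 2*s)
    (h : gB s t i = gB s t j) : i = j := by
  unfold gB at h; split_ifs at h <;> omega

lemma gA_ne_gB {s t : ℕ} (hs : 0 < s) (hst : s < t) {i j : ℕ} (hi : i < 2*t) (hj : j < 2*s) :
    gA s t i ≠ gB s t j := by
  unfold gA gB; split_ifs <;> omega

def LA (s t : ℕ) [NeZero (2*s+2*t)] : List (Fin (2*s+2*t)) :=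
  (List.range (2*t)).map fun i => (gA s t i : Fin (2*s+2*t))

def LB (s t : ℕ) [NeZero (2*s+2*t)] : List (Fin (2*s+2*t)) :=
  (List.range (2*s)).map fun j => (gB s t j : Fin (2*s+2*t))

def LR (s t : ℕ) [NeZero (2*s+2*t)] : List (Fin (2*s+2*t)) :=
  (List.range (2*s+2*t)).map fun a : ℕ => (Nat.cast a : Fin (2*s+2*t))

variable {s t : ℕ} [NeZero (2*s+2*t)]

lemma length_LA : (LA s t).length = 2*t := by simp [LA]
lemma length_LB : (LB s t).length = 2*s := by simp [LB]
lemma length_LR : (LR s t).length = 2*s+2*t := by simp [LR]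

lemma getElem_LA {i : ℕ} (h : i < (LA s t).length) :
    (LA s t)[i] = (gA s t i : Fin (2*s+2*t)) := by simp [LA]
lemma getElem_LB {j : ℕ} (h : j < (LB s t).length) :
    (LB s t)[j] = (gB s t j : Fin (2*s+2*t)) := by simp [LB]
lemma getElem_LR {a : ℕ} (h : a < (LR s t).length) :
    (LR s t)[a] = (a : Fin (2*s+2*t)) := by simp [LR]

lemma nodup_LA (hs : 0 < s) (hst : s < t) : (LA s t).Nodup := by
  refine List.Nodup.map_on ?_ List.nodup_range
  intro i hi j hj h
  rw [List.mem_range] at hi hj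
  exact gA_inj hs hst hi hj
    ((fin_cast_inj (gA_lt hs hst hi) (gA_lt hs hst hj)).mp h)

lemma nodup_LB (hs : 0 < s) (hst : s < t) : (LB s t).Nodup := by
  refine List.Nodup.map_on ?_ List.nodup_range
  intro i hi j hj h
  rw [List.mem_range] at hi hj
  exact gB_inj hs hst hi hj
    ((fin_cast_inj (gB_lt hs hst hi) (gB_lt hs hst hj)).mp h)

lemma nodup_LR : (LR s t).Nodup := by
  refine List.Nodup.map_on ?_ List.nodup_range
  intro i hi j hj h
  rw [List.mem_range] at hi hj
  exact (fin_cast_inj hi hj).mp h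

lemma disjoint_LA_LB (hs : 0 < s) (hst : s < t) : (LA s t).Disjoint (LB s t) := by
  intro x hxA hxB
  simp only [LA, LB, List.mem_map, List.mem_range] at hxA hxB
  obtain ⟨i, hi, rfl⟩ := hxA
  obtain ⟨j, hj, hji⟩ := hxB
  exact gA_ne_gB hs hst hi hj
    ((fin_cast_inj (gB_lt hs hst hj) (gA_lt hs hst hi)).mp hji).symm

end Stmt7Aux
section Part2
namespace Stmt7Aux

variable {s t : ℕ} [NeZero (2*s+2*t)]

def rperm (s t : ℕ) [NeZero (2*s+2*t)] : Equiv.Perm (Fin (2*s+2*t)) :=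
  (LR s t).formPerm

def dperm (s t : ℕ) [NeZero (2*s+2*t)] : Equiv.Perm (Fin (2*s+2*t)) :=
  Equiv.swap (Nat.cast 0) (Nat.cast (2*(t-s))) * Equiv.swap (Nat.cast 0) (Nat.cast 1)

lemma cast_ne_cast {a b : ℕ} (ha : a < 2*s+2*t) (hb : b < 2*s+2*t) (h : a ≠ b) :
    (Nat.cast a : Fin (2*s+2*t)) ≠ Nat.cast b :=
  fun he => h ((fin_cast_inj ha hb).mp he)

lemma rperm_apply (a : ℕ) (ha : a < 2*s+2*t) :
    rperm s t (Nat.cast a) = Nat.cast (a+1) := by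
  have h1 : a < (LR s t).length := by rw [length_LR]; exact ha
  have h2 := List.formPerm_apply_getElem (LR s t) nodup_LR a h1
  rw [getElem_LR, getElem_LR] at h2
  rw [rperm, h2, length_LR, fin_cast_mod]

lemma rperm_apply_last :
    rperm s t (Nat.cast (2*s+2*t-1)) = Nat.cast 0 := by
  have hn : 0 < 2*s+2*t := Nat.pos_of_ne_zero (NeZero.ne _)
  rw [rperm_apply (2*s+2*t-1) (by omega)]
  have : 2*s+2*t-1+1 = 2*s+2*t := by omega
  rw [this, ← fin_cast_mod (2*s+2*t), Nat.mod_self]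

section
variable (hs : 0 < s) (hst : s < t)

include hs hst

lemma dperm_zero : dperm s t (Nat.cast 0) = Nat.cast 1 := by
  rw [dperm, Equiv.Perm.mul_apply, Equiv.swap_apply_left,
    Equiv.swap_apply_of_ne_of_ne (cast_ne_cast (by omega) (by omega) (by omega))
      (cast_ne_cast (by omega) (by omega) (by omega))]

lemma dperm_one : dperm s t (Nat.cast 1) = Nat.cast (2*(t-s)) := by
  rw [dperm, Equiv.Perm.mul_apply, Equiv.swap_apply_right, Equiv.swap_apply_left]

lemma dperm_v : dperm s t (Nat.cast (2*(t-s))) = Nat.cast 0 := by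
  rw [dperm, Equiv.Perm.mul_apply,
    Equiv.swap_apply_of_ne_of_ne (cast_ne_cast (by omega) (by omega) (by omega))
      (cast_ne_cast (by omega) (by omega) (by omega)),
    Equiv.swap_apply_right]

lemma dperm_generic (a : ℕ) (ha : a < 2*s+2*t) (h0 : a ≠ 0) (h1 : a ≠ 1)
    (hv : a ≠ 2*(t-s)) : dperm s t (Nat.cast a) = Nat.cast a := by
  rw [dperm, Equiv.Perm.mul_apply,
    Equiv.swap_apply_of_ne_of_ne (cast_ne_cast ha (by omega) h0)
      (cast_ne_cast ha (by omega) h1),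
    Equiv.swap_apply_of_ne_of_ne (cast_ne_cast ha (by omega) h0)
      (cast_ne_cast ha (by omega) hv)]

lemma dperm_inv_zero : (dperm s t)⁻¹ (Nat.cast 0) = Nat.cast (2*(t-s)) := by
  rw [dperm, mul_inv_rev, Equiv.swap_inv, Equiv.swap_inv, Equiv.Perm.mul_apply,
    Equiv.swap_apply_left,
    Equiv.swap_apply_of_ne_of_ne (cast_ne_cast (by omega) (by omega) (by omega))
      (cast_ne_cast (by omega) (by omega) (by omega))]

lemma dperm_inv_one : (dperm s t)⁻¹ (Nat.cast 1) = Nat.cast 0 := by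
  rw [dperm, mul_inv_rev, Equiv.swap_inv, Equiv.swap_inv, Equiv.Perm.mul_apply,
    Equiv.swap_apply_of_ne_of_ne (cast_ne_cast (by omega) (by omega) (by omega))
      (cast_ne_cast (by omega) (by omega) (by omega)),
    Equiv.swap_apply_right]

lemma dperm_inv_v : (dperm s t)⁻¹ (Nat.cast (2*(t-s))) = Nat.cast 1 := by
  rw [dperm, mul_inv_rev, Equiv.swap_inv, Equiv.swap_inv, Equiv.Perm.mul_apply,
    Equiv.swap_apply_right, Equiv.swap_apply_left]

lemma dperm_inv_generic (a : ℕ) (ha : a < 2*s+2*t) (h0 : a ≠ 0) (h1 : a ≠ 1)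
    (hv : a ≠ 2*(t-s)) : (dperm s t)⁻¹ (Nat.cast a) = Nat.cast a := by
  rw [dperm, mul_inv_rev, Equiv.swap_inv, Equiv.swap_inv, Equiv.Perm.mul_apply,
    Equiv.swap_apply_of_ne_of_ne (cast_ne_cast ha (by omega) h0)
      (cast_ne_cast ha (by omega) hv),
    Equiv.swap_apply_of_ne_of_ne (cast_ne_cast ha (by omega) h0)
      (cast_ne_cast ha (by omega) h1)]

end

end Stmt7Aux
end Part2
section Part3
namespace Stmt7Aux

variable {s t : ℕ} [NeZero (2*s+2*t)]

lemma key_A (hs : 0 < s) (hst : s < t) (i : ℕ) (hi : i < 2*t) :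
    rperm s t (dperm s t (rperm s t ((dperm s t)⁻¹ (Nat.cast (gA s t i))))) =
      (Nat.cast (gA s t ((i+1) % (2*t))) : Fin (2*s+2*t)) := by
  rcases eq_or_ne i 0 with rfl | hi0
  · -- i = 0 : 1 → v+1
    have hgi : gA s t 0 = 1 := by unfold gA; split_ifs <;> first | omega | exact absurd True.intro (by assumption) | exact (‹False›).elim
    have hm : (0+1) % (2*t) = 1 := Nat.mod_eq_of_lt (by omega)
    rw [hgi, hm, dperm_inv_one hs hst, rperm_apply 0 (by omega),
      show ((0:ℕ)+1) = 1 from rfl, dperm_one hs hst,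
      rperm_apply (2*(t-s)) (by omega)]
    refine congrArg Nat.cast ?_; unfold gA; split_ifs <;> first | omega | exact absurd True.intro (by assumption) | exact (‹False›).elim
  rcases lt_or_ge i (2*s) with hi1 | hi1
  · -- 1 ≤ i ≤ 2s-1
    have hgi : gA s t i = 2*(t-s)-1+2*i := by unfold gA; split_ifs <;> first | omega | exact absurd True.intro (by assumption) | exact (‹False›).elim
    have hm : (i+1) % (2*t) = i+1 := Nat.mod_eq_of_lt (by omega)
    rw [hgi, hm,
      dperm_inv_generic hs hst (2*(t-s)-1+2*i) (by omega) (by omega) (by omega) (by omega),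
      rperm_apply (2*(t-s)-1+2*i) (by omega),
      dperm_generic hs hst (2*(t-s)-1+2*i+1) (by omega) (by omega) (by omega) (by omega),
      rperm_apply (2*(t-s)-1+2*i+1) (by omega)]
    refine congrArg Nat.cast ?_; unfold gA; split_ifs <;> first | omega | exact absurd True.intro (by assumption) | exact (‹False›).elim
  rcases eq_or_ne i (2*s) with rfl | hi2
  · -- i = 2s : n-1 → 2
    have hgi : gA s t (2*s) = 2*s+2*t-1 := by unfold gA; split_ifs <;> first | omega | exact absurd True.intro (by assumption) | exact (‹False›).elim
    have hm : (2*s+1) % (2*t) = 2*s+1 := Nat.mod_eq_of_lt (by omega)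
    rw [hgi, hm,
      dperm_inv_generic hs hst (2*s+2*t-1) (by omega) (by omega) (by omega) (by omega),
      rperm_apply_last, dperm_zero hs hst, rperm_apply 1 (by omega)]
    refine congrArg Nat.cast ?_; unfold gA; split_ifs <;> first | omega | exact absurd True.intro (by assumption) | exact (‹False›).elim
  rcases lt_or_ge i (s+t) with hi3 | hi3
  · -- 2s < i < s+t
    have hgi : gA s t i = 2*(i-2*s) := by unfold gA; split_ifs <;> first | omega | exact absurd True.intro (by assumption) | exact (‹False›).elim
    have hm : (i+1) % (2*t) = i+1 := Nat.mod_eq_of_lt (by omega)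
    rw [hgi, hm,
      dperm_inv_generic hs hst (2*(i-2*s)) (by omega) (by omega) (by omega) (by omega),
      rperm_apply (2*(i-2*s)) (by omega),
      dperm_generic hs hst (2*(i-2*s)+1) (by omega) (by omega) (by omega) (by omega),
      rperm_apply (2*(i-2*s)+1) (by omega)]
    refine congrArg Nat.cast ?_; unfold gA; split_ifs <;> first | omega | exact absurd True.intro (by assumption) | exact (‹False›).elim
  rcases eq_or_ne i (s+t) with rfl | hi4
  · -- i = s+t : v → 3 (or wrap if t = s+1)
    have hgi : gA s t (s+t) = 2*(t-s) := by unfold gA; split_ifs <;> first | omega | exact absurd True.intro (by assumption) | exact (‹False›).elim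
    rcases eq_or_ne t (s+1) with rfl | ht
    · have hm : (s+(s+1)+1) % (2*(s+1)) = 0 := by
        rw [show s+(s+1)+1 = 2*(s+1) by omega]; exact Nat.mod_self _
      rw [hgi, hm, dperm_inv_v hs hst, rperm_apply 1 (by omega),
        show ((1:ℕ)+1) = 2*((s+1)-s) by omega, dperm_v hs hst,
        rperm_apply 0 (by omega)]
      refine congrArg Nat.cast ?_; unfold gA; split_ifs <;> first | omega | exact absurd True.intro (by assumption) | exact (‹False›).elim
    · have hm : (s+t+1) % (2*t) = s+t+1 := Nat.mod_eq_of_lt (by omega)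
      rw [hgi, hm, dperm_inv_v hs hst, rperm_apply 1 (by omega),
        dperm_generic hs hst (1+1) (by omega) (by omega) (by omega) (by omega),
        rperm_apply (1+1) (by omega)]
      refine congrArg Nat.cast ?_; unfold gA; split_ifs <;> first | omega | exact absurd True.intro (by assumption) | exact (‹False›).elim
  rcases lt_or_ge i (2*t-1) with hi5 | hi5
  · -- s+t < i < 2t-1
    have hgi : gA s t i = 2*(i-s-t)+1 := by unfold gA; split_ifs <;> first | omega | exact absurd True.intro (by assumption) | exact (‹False›).elim
    have hm : (i+1) % (2*t) = i+1 := Nat.mod_eq_of_lt (by omega)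
    rw [hgi, hm,
      dperm_inv_generic hs hst (2*(i-s-t)+1) (by omega) (by omega) (by omega) (by omega),
      rperm_apply (2*(i-s-t)+1) (by omega),
      dperm_generic hs hst (2*(i-s-t)+1+1) (by omega) (by omega) (by omega) (by omega),
      rperm_apply (2*(i-s-t)+1+1) (by omega)]
    refine congrArg Nat.cast ?_; unfold gA; split_ifs <;> first | omega | exact absurd True.intro (by assumption) | exact (‹False›).elim
  · -- i = 2t-1 (then t ≥ s+2) : v-1 → 1
    have hieq : i = 2*t-1 := by omega
    subst hieq
    have ht2 : s + 2 ≤ t := by omega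
    have hgi : gA s t (2*t-1) = 2*(t-s)-1 := by unfold gA; split_ifs <;> first | omega | exact absurd True.intro (by assumption) | exact (‹False›).elim
    have hm : (2*t-1+1) % (2*t) = 0 := by
      rw [show 2*t-1+1 = 2*t by omega]; exact Nat.mod_self _
    rw [hgi, hm,
      dperm_inv_generic hs hst (2*(t-s)-1) (by omega) (by omega) (by omega) (by omega),
      rperm_apply (2*(t-s)-1) (by omega),
      show 2*(t-s)-1+1 = 2*(t-s) by omega, dperm_v hs hst,
      rperm_apply 0 (by omega)]
    refine congrArg Nat.cast ?_; unfold gA; split_ifs <;> first | omega | exact absurd True.intro (by assumption) | exact (‹False›).elim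

lemma key_B (hs : 0 < s) (hst : s < t) (j : ℕ) (hj : j < 2*s) :
    rperm s t (dperm s t (rperm s t ((dperm s t)⁻¹ (Nat.cast (gB s t j))))) =
      (Nat.cast (gB s t ((j+1) % (2*s))) : Fin (2*s+2*t)) := by
  rcases eq_or_ne j 0 with rfl | hj0
  · -- j = 0 : 0 → v+2
    have hgi : gB s t 0 = 0 := by unfold gB; split_ifs <;> first | omega | exact absurd True.intro (by assumption) | exact (‹False›).elim
    have hm : (0+1) % (2*s) = 1 := Nat.mod_eq_of_lt (by omega)
    rw [hgi, hm, dperm_inv_zero hs hst, rperm_apply (2*(t-s)) (by omega),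
      dperm_generic hs hst (2*(t-s)+1) (by omega) (by omega) (by omega) (by omega),
      rperm_apply (2*(t-s)+1) (by omega)]
    refine congrArg Nat.cast ?_; unfold gB; split_ifs <;> first | omega | exact absurd True.intro (by assumption) | exact (‹False›).elim
  rcases lt_or_ge j (2*s-1) with hj1 | hj1
  · -- 1 ≤ j ≤ 2s-2
    have hgi : gB s t j = 2*(t-s)+2*j := by unfold gB; split_ifs <;> first | omega | exact absurd True.intro (by assumption) | exact (‹False›).elim
    have hm : (j+1) % (2*s) = j+1 := Nat.mod_eq_of_lt (by omega)
    rw [hgi, hm,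
      dperm_inv_generic hs hst (2*(t-s)+2*j) (by omega) (by omega) (by omega) (by omega),
      rperm_apply (2*(t-s)+2*j) (by omega),
      dperm_generic hs hst (2*(t-s)+2*j+1) (by omega) (by omega) (by omega) (by omega),
      rperm_apply (2*(t-s)+2*j+1) (by omega)]
    refine congrArg Nat.cast ?_; unfold gB; split_ifs <;> first | omega | exact absurd True.intro (by assumption) | exact (‹False›).elim
  · -- j = 2s-1 : n-2 → 0
    have hjeq : j = 2*s-1 := by omega
    subst hjeq
    have hgi : gB s t (2*s-1) = 2*s+2*t-2 := by unfold gB; split_ifs <;> first | omega | exact absurd True.intro (by assumption) | exact (‹False›).elim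
    have hm : (2*s-1+1) % (2*s) = 0 := by
      rw [show 2*s-1+1 = 2*s by omega]; exact Nat.mod_self _
    rw [hgi, hm,
      dperm_inv_generic hs hst (2*s+2*t-2) (by omega) (by omega) (by omega) (by omega),
      rperm_apply (2*s+2*t-2) (by omega),
      dperm_generic hs hst (2*s+2*t-2+1) (by omega) (by omega) (by omega) (by omega),
      show 2*s+2*t-2+1 = 2*s+2*t-1 by omega, rperm_apply_last]
    refine congrArg Nat.cast ?_; unfold gB; split_ifs <;> first | omega | exact absurd True.intro (by assumption) | exact (‹False›).elim

end Stmt7Aux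
end Part3
section Part4
namespace Stmt7Aux

open Equiv Equiv.Perm

variable {s t : ℕ} [NeZero (2*s+2*t)]

def cA (s t : ℕ) [NeZero (2*s+2*t)] : Equiv.Perm (Fin (2*s+2*t)) := (LA s t).formPerm
def cB (s t : ℕ) [NeZero (2*s+2*t)] : Equiv.Perm (Fin (2*s+2*t)) := (LB s t).formPerm

section
variable (hs : 0 < s) (hst : s < t)
include hs hst

lemma isCycle_cA : (cA s t).IsCycle :=
  List.isCycle_formPerm (nodup_LA hs hst) (by rw [length_LA]; omega)

lemma isCycle_cB : (cB s t).IsCycle :=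
  List.isCycle_formPerm (nodup_LB hs hst) (by rw [length_LB]; omega)

lemma support_cA : (cA s t).support = (LA s t).toFinset := by
  refine List.support_formPerm_of_nodup _ (nodup_LA hs hst) (fun x h => ?_)
  have := congrArg List.length h
  rw [length_LA] at this
  simp only [List.length_cons, List.length_nil] at this; omega

lemma support_cB : (cB s t).support = (LB s t).toFinset := by
  refine List.support_formPerm_of_nodup _ (nodup_LB hs hst) (fun x h => ?_)
  have := congrArg List.length h
  rw [length_LB] at this
  simp only [List.length_cons, List.length_nil] at this; omega

lemma card_support_cA : (cA s t).support.card = 2*t := by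
  rw [support_cA hs hst, List.toFinset_card_of_nodup (nodup_LA hs hst), length_LA]

lemma card_support_cB : (cB s t).support.card = 2*s := by
  rw [support_cB hs hst, List.toFinset_card_of_nodup (nodup_LB hs hst), length_LB]

end

lemma isCycle_r (hs : 0 < s) : (rperm s t).IsCycle :=
  List.isCycle_formPerm nodup_LR (by rw [length_LR]; omega)

lemma card_support_r (hs : 0 < s) : (rperm s t).support.card = 2*s+2*t := by
  have h : (rperm s t).support = (LR s t).toFinset := by
    refine List.support_formPerm_of_nodup _ nodup_LR (fun x h => ?_)
    have := congrArg List.length h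
    rw [length_LR] at this
    simp only [List.length_cons, List.length_nil] at this; omega
  rw [h, List.toFinset_card_of_nodup nodup_LR, length_LR]

lemma mem_LA_or_LB (hs : 0 < s) (hst : s < t) (x : Fin (2*s+2*t)) :
    x ∈ LA s t ∨ x ∈ LB s t := by
  have hnd : (LA s t ++ LB s t).Nodup :=
    (nodup_LA hs hst).append (nodup_LB hs hst) (disjoint_LA_LB hs hst)
  have huniv : (LA s t ++ LB s t).toFinset = Finset.univ := by
    refine Finset.eq_univ_of_card _ ?_
    rw [List.toFinset_card_of_nodup hnd, List.length_append, length_LA, length_LB,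
      Fintype.card_fin]
    omega
  have hx : x ∈ (LA s t ++ LB s t).toFinset := huniv ▸ Finset.mem_univ x
  rw [List.mem_toFinset, List.mem_append] at hx
  exact hx

lemma not_mem_LB_of_idxA (hs : 0 < s) (hst : s < t) {i : ℕ} (hi : i < 2*t) :
    (Nat.cast (gA s t i) : Fin (2*s+2*t)) ∉ LB s t := by
  intro hmem
  simp only [LB, List.mem_map, List.mem_range] at hmem
  obtain ⟨j, hj, hji⟩ := hmem
  exact gA_ne_gB hs hst hi hj
    ((fin_cast_inj (gB_lt hs hst hj) (gA_lt hs hst hi)).mp hji).symm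

lemma not_mem_LA_of_idxB (hs : 0 < s) (hst : s < t) {j : ℕ} (hj : j < 2*s) :
    (Nat.cast (gB s t j) : Fin (2*s+2*t)) ∉ LA s t := by
  intro hmem
  simp only [LA, List.mem_map, List.mem_range] at hmem
  obtain ⟨i, hi, hij⟩ := hmem
  exact gA_ne_gB hs hst hi hj ((fin_cast_inj (gA_lt hs hst hi) (gB_lt hs hst hj)).mp hij)

lemma sigma0_eq (hs : 0 < s) (hst : s < t) :
    rperm s t * (dperm s t * rperm s t * (dperm s t)⁻¹) = cB s t * cA s t := by
  apply Equiv.ext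
  intro x
  simp only [Equiv.Perm.mul_apply]
  rcases mem_LA_or_LB hs hst x with hx | hx
  · obtain ⟨i, hi, rfl⟩ := List.getElem_of_mem hx
    have hiL : i < 2*t := by rw [length_LA] at hi; exact hi
    have h1 : cA s t (Nat.cast (gA s t i)) = (Nat.cast (gA s t ((i+1) % (2*t))) : Fin (2*s+2*t)) := by
      have h2 := List.formPerm_apply_getElem (LA s t) (nodup_LA hs hst) i hi
      rw [getElem_LA] at h2
      rw [cA, h2, getElem_LA, length_LA]
    have hlt : (i+1) % (2*t) < 2*t := Nat.mod_lt _ (by omega)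
    have h3 : cB s t (Nat.cast (gA s t ((i+1) % (2*t)))) =
        (Nat.cast (gA s t ((i+1) % (2*t))) : Fin (2*s+2*t)) :=
      List.formPerm_apply_of_notMem (not_mem_LB_of_idxA hs hst hlt)
    rw [getElem_LA, h1, h3, key_A hs hst i hiL]
  · obtain ⟨j, hj, rfl⟩ := List.getElem_of_mem hx
    have hjL : j < 2*s := by rw [length_LB] at hj; exact hj
    have h1 : cA s t (Nat.cast (gB s t j)) = (Nat.cast (gB s t j) : Fin (2*s+2*t)) :=
      List.formPerm_apply_of_notMem (not_mem_LA_of_idxB hs hst hjL)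
    have h2 : cB s t (Nat.cast (gB s t j)) = (Nat.cast (gB s t ((j+1) % (2*s))) : Fin (2*s+2*t)) := by
      have h4 := List.formPerm_apply_getElem (LB s t) (nodup_LB hs hst) j hj
      rw [getElem_LB] at h4
      rw [cB, h4, getElem_LB, length_LB]
    rw [getElem_LB, h1, h2, key_B hs hst j hjL]

end Stmt7Aux
end Part4
open Equiv Equiv.Perm Stmt7Aux
theorem stmt_7 (n s t : ℕ) (hs : 0 < s) (hst : s < t) (hn : n = 2 * s + 2 * t)
    (σ c₁ c₂ : Equiv.Perm (Fin n))
    (hc₁ : c₁.IsCycle) (hc₁card : c₁.support.card = 2 * s)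
    (hc₂ : c₂.IsCycle) (hc₂card : c₂.support.card = 2 * t)
    (hdisj : Disjoint c₁.support c₂.support)
    (hσ : σ = c₁ * c₂) :
    ∃ ρ₁ ρ₂ : Equiv.Perm (Fin n),
      ρ₁.IsCycle ∧ ρ₁.support.card = n ∧
      ρ₂.IsCycle ∧ ρ₂.support.card = n ∧ σ = ρ₁ * ρ₂ := by
  subst hn
  haveI : NeZero (2*s+2*t) := ⟨by omega⟩
  -- disjointness of the model cycles
  have hdisj0 : (cB s t).Disjoint (cA s t) := by
    rw [disjoint_iff_disjoint_support, support_cB hs hst, support_cA hs hst,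
      Finset.disjoint_left]
    intro a haB haA
    rw [List.mem_toFinset] at haA haB
    simp only [LB, List.mem_map, List.mem_range] at haB
    obtain ⟨j, hj, rfl⟩ := haB
    exact not_mem_LA_of_idxB hs hst hj haA
  have hct0 : (cB s t * cA s t).cycleType = {2*s} + {2*t} := by
    rw [hdisj0.cycleType_mul, (isCycle_cB hs hst).cycleType, (isCycle_cA hs hst).cycleType,
      card_support_cB hs hst, card_support_cA hs hst]
  have hdisjp : c₁.Disjoint c₂ := disjoint_iff_disjoint_support.mpr hdisj
  have hctσ : σ.cycleType = {2*s} + {2*t} := by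
    rw [hσ, hdisjp.cycleType_mul, hc₁.cycleType, hc₂.cycleType, hc₁card, hc₂card]
  have hconj : IsConj (rperm s t * (dperm s t * rperm s t * (dperm s t)⁻¹)) σ := by
    rw [sigma0_eq hs hst]
    exact isConj_iff_cycleType_eq.mpr (by rw [hct0, hctσ])
  obtain ⟨z, hz⟩ := isConj_iff.mp hconj
  refine ⟨z * rperm s t * z⁻¹, z * (dperm s t * rperm s t * (dperm s t)⁻¹) * z⁻¹,
    (isCycle_r hs).conj, ?_, ((isCycle_r hs).conj).conj, ?_, ?_⟩
  · rw [card_support_conj, card_support_r hs]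
  · rw [card_support_conj, card_support_conj, card_support_r hs]
  · rw [← hz]
    group
end

section
/- Every even permutation in S_n is a commutator of two elements of S_n, i.e., for every σ ∈ A_n there exist τ₁, τ₂ ∈ S_n with σ = τ₁τ₂τ₁⁻¹τ₂⁻¹. -/
open Equiv Equiv.Perm Finset
open Equiv (addLeft subLeft)

/-!
Write `σ = x * y` with involutions `x`, `y` whose supports have the same size. Then `y = g x g⁻¹`
for some `g`, and since `x = x⁻¹` this gives `σ = x g x⁻¹ g⁻¹`.

A `k`-cycle is modelled on `ZMod k` by the rotation `x ↦ x + 1`, the product of the reflections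
`x ↦ (a + 1) - x` and `x ↦ a - x`. Conjugating `x ↦ b - x` by a translation by `m` changes `b` to
`b + 2m`. For odd `k` all reflections are therefore conjugate and the two factors have equally large
supports; for even `k` the reflection `x ↦ b - x` moves `k - 2` or `k` points according to the
parity of `b`, so the sizes differ by `2`, with either sign available. An even permutation has an
even number of cycles of even length, so these differences can be made to cancel.
-/

theorem Int.exists_add_eq_of_abs_eq_one_sub_mul (s t : ℤˣ) {d : ℤ}
    (hd : |d| = 1 - ((s * t : ℤˣ) : ℤ)) :
    ∃ d₁ d₂ : ℤ, |d₁| = 1 - s ∧ |d₂| = 1 - t ∧ d = d₁ + d₂ := by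
  rcases Int.units_eq_one_or s with rfl | rfl
  · exact ⟨0, d, by simp, by simpa using hd, (zero_add d).symm⟩
  rcases Int.units_eq_one_or t with rfl | rfl
  · exact ⟨d, 0, by simpa using hd, by simp, (add_zero d).symm⟩
  · exact ⟨2, -2, by norm_num, by norm_num, by simpa using hd⟩

theorem exists_commutator_eq_of_isConj_inv {G : Type*} [Group G] {x y : G} (h : IsConj x⁻¹ y) :
    ∃ a b : G, x * y = a * b * a⁻¹ * b⁻¹ := by
  obtain ⟨g, rfl⟩ := isConj_iff.mp h
  exact ⟨x, g, by group⟩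

namespace Equiv.Perm

variable {α β : Type*} [Fintype α] [DecidableEq α] [Fintype β] [DecidableEq β]

theorem isConj_of_sq_eq_one {x y : Perm α} (hx : x ^ 2 = 1) (hy : y ^ 2 = 1)
    (h : #x.support = #y.support) : IsConj x y := by
  have hcard : ∀ z : Perm α, z ^ 2 = 1 → #z.support = z.cycleType.card * 2 := fun z hz => by
    rw [← sum_cycleType, cycleType_of_pow_prime_eq_one hz, Multiset.sum_replicate, smul_eq_mul,
      Multiset.card_replicate]
  rw [hcard x hx, hcard y hy] at h
  rw [isConj_iff_cycleType_eq, cycleType_of_pow_prime_eq_one hx, cycleType_of_pow_prime_eq_one hy,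
    Nat.eq_of_mul_eq_mul_right two_pos h]

def HasInvolutiveFactorization (σ : Perm α) (d : ℤ) : Prop :=
  ∃ x y : Perm α, x ^ 2 = 1 ∧ y ^ 2 = 1 ∧ σ = x * y ∧
    x.support ⊆ σ.support ∧ y.support ⊆ σ.support ∧ (#x.support : ℤ) = #y.support + d

namespace HasInvolutiveFactorization

theorem one : HasInvolutiveFactorization (1 : Perm α) 0 :=
  ⟨1, 1, one_pow 2, one_pow 2, (mul_one 1).symm, subset_rfl, subset_rfl, (add_zero _).symm⟩

theorem mul {σ τ : Perm α} {d₁ d₂ : ℤ} (hστ : σ.Disjoint τ)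
    (hσ : HasInvolutiveFactorization σ d₁) (hτ : HasInvolutiveFactorization τ d₂) :
    HasInvolutiveFactorization (σ * τ) (d₁ + d₂) := by
  obtain ⟨x₁, y₁, hx₁, hy₁, rfl, hsx₁, hsy₁, hd₁⟩ := hσ
  obtain ⟨x₂, y₂, hx₂, hy₂, rfl, hsx₂, hsy₂, hd₂⟩ := hτ
  have hdisj : ∀ {a b : Perm α}, a.support ⊆ (x₁ * y₁).support →
      b.support ⊆ (x₂ * y₂).support → a.Disjoint b := fun ha hb =>
    disjoint_iff_disjoint_support.mpr (hστ.disjoint_support.mono ha hb)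
  have hxx := hdisj hsx₁ hsx₂
  have hyy := hdisj hsy₁ hsy₂
  refine ⟨x₁ * x₂, y₁ * y₂, ?_, ?_, ?_, ?_, ?_, ?_⟩
  · rw [hxx.commute.mul_pow, hx₁, hx₂, one_mul]
  · rw [hyy.commute.mul_pow, hy₁, hy₂, one_mul]
  · rw [mul_assoc, ← mul_assoc y₁, (hdisj hsy₁ hsx₂).commute.eq]
    group
  · rw [hστ.support_mul, hxx.support_mul]
    exact union_subset_union hsx₁ hsx₂
  · rw [hστ.support_mul, hyy.support_mul]
    exact union_subset_union hsy₁ hsy₂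
  · rw [hxx.card_support_mul, hyy.card_support_mul]
    push_cast
    linarith

theorem map {σ : Perm α} {d : ℤ} (h : HasInvolutiveFactorization σ d) (φ : Perm α →* Perm β)
    (e : α ↪ β) (hφ : ∀ x, (φ x).support = x.support.map e) :
    HasInvolutiveFactorization (φ σ) d := by
  obtain ⟨x, y, hx, hy, rfl, hsx, hsy, hd⟩ := h
  refine ⟨φ x, φ y, ?_, ?_, map_mul φ x y, ?_, ?_, ?_⟩
  · rw [← map_pow, hx, map_one]
  · rw [← map_pow, hy, map_one]
  · rw [hφ, hφ]
    exact map_subset_map.mpr hsx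
  · rw [hφ, hφ]
    exact map_subset_map.mpr hsy
  · rwa [hφ, hφ, card_map, card_map]

theorem of_isConj {σ τ : Perm α} {d : ℤ} (h : HasInvolutiveFactorization σ d) (hστ : IsConj σ τ) :
    HasInvolutiveFactorization τ d := by
  obtain ⟨g, rfl⟩ := isConj_iff.mp hστ
  exact h.map (MulAut.conj g).toMonoidHom g.toEmbedding fun _ => support_conj

end HasInvolutiveFactorization

end Equiv.Perm

section Reflections

variable {A : Type*} [AddCommGroup A]

theorem Equiv.subLeft_sq (a : A) : (subLeft a : Perm A) ^ 2 = 1 := by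
  ext x; simp [sq]

theorem Equiv.subLeft_mul_subLeft (a b : A) :
    (subLeft b : Perm A) * subLeft a = addLeft (b - a) := by
  ext x; simp only [Perm.mul_apply, subLeft_apply, coe_addLeft]; abel

theorem Equiv.addLeft_mul_subLeft_mul_inv (m a : A) :
    (addLeft m : Perm A) * subLeft a * (addLeft m)⁻¹ = subLeft (a + m + m) := by
  ext x
  simp only [Perm.mul_apply, Perm.inv_def, addLeft_symm, subLeft_apply, coe_addLeft,
    neg_add_eq_sub]
  abel

end Reflections

namespace ZMod

variable {k : ℕ} [NeZero k]

theorem support_addLeft_one (hk : 1 < k) :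
    (addLeft (1 : ZMod k) : Perm (ZMod k)).support = univ := by
  have : Fact (1 < k) := ⟨hk⟩
  ext x; simp

theorem isCycle_addLeft_one (hk : 1 < k) : (addLeft (1 : ZMod k) : Perm (ZMod k)).IsCycle := by
  have : Fact (1 < k) := ⟨hk⟩
  exact ⟨0, by simp, fun y _ => ⟨y.val, by simp⟩⟩

theorem card_support_subLeft_add_add (a m : ZMod k) :
    #(support (subLeft (a + m + m))) = #(support (subLeft a)) := by
  rw [← addLeft_mul_subLeft_mul_inv, card_support_conj]

theorem card_support_subLeft_one_of_odd (hk : Odd k) :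
    #(support (subLeft (1 : ZMod k))) = #(support (subLeft (0 : ZMod k))) := by
  obtain ⟨t, rfl⟩ := hk
  convert card_support_subLeft_add_add 0 ((t + 1 : ℕ) : ZMod (2 * t + 1)) using 4
  have := ZMod.natCast_self (2 * t + 1)
  push_cast at this ⊢
  linear_combination -this

theorem card_support_subLeft_one_of_even (hk : Even k) :
    #(support (subLeft (1 : ZMod k))) = k := by
  suffices (support (subLeft (1 : ZMod k))) = univ by rw [this, card_univ, ZMod.card]
  refine eq_univ_of_forall fun x => mem_support.mpr fun hx => ?_
  have h := congrArg (ZMod.castHom hk.two_dvd (ZMod 2)) (eq_sub_iff_add_eq.mp hx.symm)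
  rw [map_add, map_one] at h
  have hodd : ∀ y : ZMod 2, y + y ≠ 1 := by decide
  exact hodd _ h

theorem card_support_subLeft_zero_add_two_of_even (hk : Even k) :
    #(support (subLeft (0 : ZMod k))) + 2 = k := by
  obtain ⟨t, rfl⟩ := hk
  have hlt : t < t + t := by have := NeZero.ne (t + t); omega
  have hfix : (support (subLeft (0 : ZMod (t + t))))ᶜ = {0, (t : ZMod (t + t))} := by
    ext x
    simp only [mem_compl, mem_support, not_not, subLeft_apply, zero_sub, ZMod.neg_eq_self_iff,
      mem_insert, mem_singleton]
    refine or_congr_right ?_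
    rw [show 2 * x.val = t + t ↔ x.val = t by omega]
    exact ⟨fun h => (ZMod.natCast_zmod_val x).symm.trans (congrArg Nat.cast h),
      fun h => h ▸ ZMod.val_natCast_of_lt hlt⟩
  have hne : (0 : ZMod (t + t)) ≠ t := by
    intro h
    have := congrArg ZMod.val h
    rw [ZMod.val_zero, ZMod.val_natCast_of_lt hlt] at this
    omega
  have := card_add_card_compl (support (subLeft (0 : ZMod (t + t))))
  rwa [hfix, card_pair hne, ZMod.card] at this

theorem hasInvolutiveFactorization_addLeft_one (hk : 1 < k) (a : ZMod k) :
    HasInvolutiveFactorization (addLeft (1 : ZMod k) : Perm (ZMod k))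
      ((#(support (subLeft (a + 1))) : ℤ) - #(support (subLeft a))) :=
  ⟨subLeft (a + 1), subLeft a, subLeft_sq _, subLeft_sq _,
    by rw [subLeft_mul_subLeft, add_sub_cancel_left],
    by rw [support_addLeft_one hk]; exact subset_univ _,
    by rw [support_addLeft_one hk]; exact subset_univ _, by ring⟩

theorem hasInvolutiveFactorization_addLeft_one_of_abs_eq (hk : 1 < k) {d : ℤ}
    (hd : |d| = 1 + (-1) ^ k) :
    HasInvolutiveFactorization (addLeft (1 : ZMod k) : Perm (ZMod k)) d := by
  rcases Nat.even_or_odd k with heven | hodd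
  · rw [heven.neg_one_pow] at hd
    have h0 := card_support_subLeft_zero_add_two_of_even heven
    have h1 := card_support_subLeft_one_of_even heven
    obtain rfl | rfl := abs_eq (by norm_num : (0 : ℤ) ≤ 2) |>.mp (by linarith)
    · convert hasInvolutiveFactorization_addLeft_one hk 0 using 1
      rw [zero_add]; omega
    · convert hasInvolutiveFactorization_addLeft_one hk 1 using 1
      rw [show (1 + 1 : ZMod k) = 0 + 1 + 1 by ring, card_support_subLeft_add_add]; omega
  · rw [hodd.neg_one_pow, add_neg_cancel, abs_eq_zero] at hd
    subst hd
    convert hasInvolutiveFactorization_addLeft_one hk 0 using 1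
    rw [zero_add, card_support_subLeft_one_of_odd hodd, sub_self]

end ZMod

namespace Equiv.Perm

variable {α : Type*} [Fintype α] [DecidableEq α]

theorem IsCycle.hasInvolutiveFactorization {c : Perm α} (hc : c.IsCycle) {d : ℤ}
    (hd : |d| = 1 - Perm.sign c) : HasInvolutiveFactorization c d := by
  set k := #c.support
  have hk : 1 < k := hc.two_le_card_support
  have : NeZero k := ⟨by omega⟩
  let f : ZMod k ≃ {a // a ∈ c.support} :=
    Fintype.equivOfCardEq (by rw [ZMod.card, Fintype.card_coe])
  have hsign : (1 : ℤ) - Perm.sign c = 1 + (-1) ^ k := by rw [hc.sign]; push_cast; ring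
  refine ((ZMod.hasInvolutiveFactorization_addLeft_one_of_abs_eq hk (hsign ▸ hd)).map
    (extendDomainHom f) f.asEmbedding fun _ => support_extend_domain f).of_isConj ?_
  refine ((ZMod.isCycle_addLeft_one hk).extendDomain f).isConj hc ?_
  rw [card_support_extend_domain, ZMod.support_addLeft_one hk, card_univ, ZMod.card]

-- `|d| = 1 - sign σ` means `d = 0` for even `σ` and `d = ±2` for odd `σ`.
theorem hasInvolutiveFactorization_of_abs_eq (σ : Perm α) {d : ℤ} (hd : |d| = 1 - sign σ) :
    HasInvolutiveFactorization σ d := by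
  induction σ using cycle_induction_on generalizing d with
  | base_one =>
    rw [sign_one, Units.val_one, sub_self, abs_eq_zero] at hd
    exact hd ▸ .one
  | base_cycles c hc => exact hc.hasInvolutiveFactorization hd
  | induction_disjoint σ τ hστ _ ihσ ihτ =>
    rw [sign_mul] at hd
    obtain ⟨d₁, d₂, h₁, h₂, rfl⟩ := Int.exists_add_eq_of_abs_eq_one_sub_mul _ _ hd
    exact (ihσ h₁).mul hστ (ihτ h₂)

end Equiv.Perm

theorem stmt_10 (n : ℕ) (σ : Equiv.Perm (Fin n))
    (hσ : Equiv.Perm.sign σ = 1) :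
    ∃ τ₁ τ₂ : Equiv.Perm (Fin n), σ = τ₁ * τ₂ * τ₁⁻¹ * τ₂⁻¹ := by
  obtain ⟨x, y, hx, hy, rfl, -, -, hcard⟩ :=
    hasInvolutiveFactorization_of_abs_eq σ (d := 0) (by simp [hσ])
  refine exists_commutator_eq_of_isConj_inv (isConj_of_sq_eq_one ?_ hy ?_)
  · rw [inv_pow, hx, inv_one]
  · rw [support_inv]; omega
end
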